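/- (Recovery of weights) Let [n_1,…,n_s] and [ñ_1,…,ñ_{s̃}] be finite multisets of integers ≥ 2 with χ_{[n_1,…,n_s]} = χ_{[ñ_1,…,ñ_{s̃}]} in ℤ[X]. Then: (a) for every integer d ≥ 3, the number of indices i with n_i = d equals the number of indices i with ñ_i = d; (b) s ≡ s̃ (mod 2); and (c) the number of indices i with n_i = 2 is congruent modulo 2 to the number of indices i with ñ_i = 2. -/

import Mathlib

/-!
Over `ℂ`, `Φ_[n]` is diagonalised by the transposed Vandermonde matrix of the nontrivial `n`-th
roots of unity, so `Φ_{[n_1,…,n_s]}` is diagonalised by the Kronecker product of these matrices,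
and `χ_{[n_1,…,n_s]}` determines the power sums of its eigenvalues
`p_k = tr Φ^k = ∏ᵢ tr Φ_[n_i]^k = ∏ᵢ (n_i [n_i ∣ k] - 1)`.
Now `p_1 = (-1)^s` and `p_2 = (-1)^#{i | n_i ≠ 2}` give the parities, while
`|p_d| = ∏_{e ∣ d} (e - 1)^{c_e}`, with `c_e` the multiplicity of the weight `e`,
determines `c_d` for `d ≥ 3` by strong induction on `d`.
-/

open Matrix Polynomial

/-- The Coxeter matrix `Φ_[n]` of the linearly oriented quiver of type `A_{n-1}`:
the `(n-1) × (n-1)` integer matrix whose `(i,j)`-entry is `1` if `j = i + 1`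
(for rows other than the last), whose last row has all entries `-1`, and whose
other entries are `0`. -/
def PhiA (n : ℕ) : Matrix (Fin (n - 1)) (Fin (n - 1)) ℤ :=
  fun i j =>
    if (i : ℕ) = n - 2 then -1
    else if (j : ℕ) = (i : ℕ) + 1 then 1 else 0

/-- The Kronecker (tensor) product `Φ_{[n_1,…,n_s]} = Φ_{[n_1]} ⊗ ⋯ ⊗ Φ_{[n_s]}`,
realized on the index type `Π i, Fin (n i - 1)`. -/
def PhiProd {s : ℕ} (n : Fin s → ℕ) :
    Matrix ((i : Fin s) → Fin (n i - 1)) ((i : Fin s) → Fin (n i - 1)) ℤ :=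
  fun x y => ∏ i, PhiA (n i) (x i) (y i)

/-- The characteristic polynomial `χ_{[n_1,…,n_s]} ∈ ℤ[X]` of `Φ_{[n_1,…,n_s]}`. -/
noncomputable def Chi {s : ℕ} (n : Fin s → ℕ) : Polynomial ℤ :=
  (PhiProd n).charpoly

/-- The standard primitive complex `m`-th root of unity `exp(2π√-1/m)`. -/
noncomputable def zeta (m : ℕ) : ℂ := Complex.exp (2 * Real.pi * Complex.I / m)

open Finset

namespace Matrix

section PiKronecker

variable {ι R : Type*} [Fintype ι] [CommSemiring R] {κ μ ν : ι → Type*}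

def piKronecker (A : ∀ i, Matrix (κ i) (μ i) R) : Matrix (∀ i, κ i) (∀ i, μ i) R :=
  of fun x y => ∏ i, A i (x i) (y i)

theorem piKronecker_mul [DecidableEq ι] [∀ i, Fintype (μ i)]
    (A : ∀ i, Matrix (κ i) (μ i) R) (B : ∀ i, Matrix (μ i) (ν i) R) :
    piKronecker A * piKronecker B = piKronecker fun i => A i * B i := by
  ext x y
  simp only [piKronecker, mul_apply, of_apply, ← prod_mul_distrib]
  exact (Fintype.prod_sum fun i c => A i (x i) c * B i c (y i)).symm

theorem piKronecker_diagonal [DecidableEq ι] [∀ i, DecidableEq (κ i)] (d : ∀ i, κ i → R) :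
    piKronecker (fun i => diagonal (d i)) = diagonal fun x => ∏ i, d i (x i) := by
  ext x y
  by_cases hxy : x = y
  · simp [piKronecker, hxy]
  · obtain ⟨i, hi⟩ := Function.ne_iff.mp hxy
    simpa [piKronecker, hxy] using prod_eq_zero (mem_univ i) (by simp [hi])

theorem piKronecker_one [DecidableEq ι] [∀ i, DecidableEq (κ i)] :
    piKronecker (fun i => (1 : Matrix (κ i) (κ i) R)) = 1 := by
  simpa using piKronecker_diagonal (R := R) fun i (_ : κ i) => 1

theorem piKronecker_map {S : Type*} [CommSemiring S] (A : ∀ i, Matrix (κ i) (μ i) R)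
    (f : R →+* S) : (piKronecker A).map f = piKronecker fun i => (A i).map f := by
  ext x y
  simp [piKronecker]

end PiKronecker

theorem charpoly_eq_prod_of_mul_eq_mul_diagonal {n R : Type*} [Fintype n] [DecidableEq n]
    [CommRing R] {M P : Matrix n n R} {d : n → R} (hP : IsUnit P.det)
    (h : M * P = P * diagonal d) : M.charpoly = ∏ i, (X - C (d i)) := by
  have hM : M = P * (diagonal d * P⁻¹) := by
    rw [← Matrix.mul_assoc, ← h, mul_nonsing_inv_cancel_right _ _ hP]
  rw [hM, charpoly_mul_comm, Matrix.mul_assoc, nonsing_inv_mul _ hP, Matrix.mul_one,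
    charpoly_diagonal]

theorem charpoly_piKronecker_of_mul_eq_mul_diagonal {ι R : Type*} [Fintype ι] [DecidableEq ι]
    [CommRing R] {κ : ι → Type*} [∀ i, Fintype (κ i)] [∀ i, DecidableEq (κ i)]
    {A P : ∀ i, Matrix (κ i) (κ i) R} {d : ∀ i, κ i → R} (hP : ∀ i, IsUnit (P i).det)
    (h : ∀ i, A i * P i = P i * diagonal (d i)) :
    (piKronecker A).charpoly = ∏ x : ∀ i, κ i, (X - C (∏ i, d i (x i))) := by
  refine charpoly_eq_prod_of_mul_eq_mul_diagonal (P := piKronecker P)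
    (isUnit_det_of_right_inverse (B := piKronecker fun i => (P i)⁻¹) ?_) ?_
  · simp only [piKronecker_mul, mul_nonsing_inv _ (hP _), piKronecker_one]
  · simp only [piKronecker_mul, h, ← piKronecker_diagonal]

end Matrix

theorem PhiA_map_mul_vandermonde_transpose {K : Type*} [CommRing K] {n : ℕ}
    {d : Fin (n - 1) → K} (hd : ∀ j, ∑ l ∈ range n, d j ^ l = 0) :
    (PhiA n).map (Int.castRingHom K) * (vandermonde d)ᵀ = (vandermonde d)ᵀ * diagonal d := by
  ext i j
  have hn : n - 1 + 1 = n := by have := i.2; omega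
  rw [mul_diagonal, mul_apply]
  simp only [transpose_apply, vandermonde_apply, map_apply, PhiA, ← pow_succ]
  by_cases hi : (i : ℕ) = n - 2
  · have hsum := hd j
    rw [← hn, sum_range_succ, ← Fin.sum_univ_eq_sum_range (d j ^ ·)] at hsum
    simp only [hi, if_true, map_neg, map_one, neg_one_mul, sum_neg_distrib]
    rw [show n - 2 + 1 = n - 1 by omega]
    linear_combination -hsum
  · have hi' : (i : ℕ) + 1 < n - 1 := by omega
    simp only [hi, if_false, apply_ite (Int.castRingHom K), map_one, map_zero, ite_mul, one_mul,
      zero_mul]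
    rw [Fintype.sum_eq_single ⟨(i : ℕ) + 1, hi'⟩ fun l hl => if_neg fun h => hl (Fin.ext h)]
    simp

theorem IsPrimitiveRoot.sum_range_pow_pow {K : Type*} [CommRing K] [IsDomain K] {ζ : K} {n : ℕ}
    (hζ : IsPrimitiveRoot ζ n) (k : ℕ) :
    ∑ l ∈ range n, (ζ ^ k) ^ l = if n ∣ k then (n : K) else 0 := by
  split_ifs with hk
  · simp [(hζ.pow_eq_one_iff_dvd k).mpr hk]
  · have hne : ζ ^ k - 1 ≠ 0 := sub_ne_zero.mpr fun h => hk ((hζ.pow_eq_one_iff_dvd k).mp h)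
    refine (mul_eq_zero.mp ?_).resolve_right hne
    rw [geom_sum_mul, ← pow_mul, mul_comm, pow_mul, hζ.pow_eq_one, one_pow, sub_self]

/-- `tr Φ_[d]^k`: the eigenvalues of `Φ_[d]` are the `d`-th roots of unity other than `1`. -/
def phiPowerSum (d k : ℕ) : ℤ := (if d ∣ k then (d : ℤ) else 0) - 1

theorem IsPrimitiveRoot.sum_pow_succ_pow {K : Type*} [CommRing K] [IsDomain K] {ζ : K} {n : ℕ}
    (hζ : IsPrimitiveRoot ζ n) (hn : n ≠ 0) (k : ℕ) :
    ∑ j : Fin (n - 1), (ζ ^ ((j : ℕ) + 1)) ^ k = phiPowerSum n k := by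
  obtain ⟨n, rfl⟩ := Nat.exists_eq_succ_of_ne_zero hn
  have hsum := hζ.sum_range_pow_pow k
  rw [sum_range_succ'] at hsum
  simp_rw [← pow_mul, mul_comm _ k, pow_mul]
  rw [Nat.succ_sub_one, Fin.sum_univ_eq_sum_range (fun j => (ζ ^ k) ^ (j + 1)), phiPowerSum]
  push_cast [Nat.succ_eq_add_one] at hsum ⊢
  split_ifs at hsum ⊢ <;> linear_combination hsum

theorem Polynomial.roots_prod_univ_X_sub_C {ι R : Type*} [Fintype ι] [CommRing R] [IsDomain R]
    (f : ι → R) : (∏ x, (X - C (f x))).roots = univ.val.map f := by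
  have h := roots_multiset_prod_X_sub_C (univ.val.map f)
  rwa [Multiset.map_map] at h

theorem isPrimitiveRoot_zeta {n : ℕ} (hn : n ≠ 0) : IsPrimitiveRoot (zeta n) n :=
  Complex.isPrimitiveRoot_exp n hn

theorem PhiProd_eq_piKronecker {s : ℕ} (n : Fin s → ℕ) :
    PhiProd n = piKronecker fun i => PhiA (n i) := rfl

theorem Chi_map_eq_prod_X_sub_C {s : ℕ} {n : Fin s → ℕ} (hn : ∀ i, 2 ≤ n i) :
    (Chi n).map (Int.castRingHom ℂ) =
      ∏ x : ∀ i, Fin (n i - 1), (X - C (∏ i, zeta (n i) ^ ((x i : ℕ) + 1))) := by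
  have hζ i : IsPrimitiveRoot (zeta (n i)) (n i) := isPrimitiveRoot_zeta (by have := hn i; omega)
  rw [Chi, ← charpoly_map, PhiProd_eq_piKronecker, piKronecker_map]
  refine charpoly_piKronecker_of_mul_eq_mul_diagonal
    (d := fun i j => zeta (n i) ^ ((j : ℕ) + 1))
    (P := fun i => (vandermonde fun j => zeta (n i) ^ ((j : ℕ) + 1))ᵀ) (fun i => ?_) (fun i => ?_)
  · rw [det_transpose, isUnit_iff_ne_zero, det_vandermonde_ne_zero_iff]
    intro a b hab
    have := (hζ i).pow_inj (by omega) (by omega) hab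
    exact Fin.ext (by omega)
  · refine PhiA_map_mul_vandermonde_transpose fun j => ?_
    rw [(hζ i).sum_range_pow_pow, if_neg (Nat.not_dvd_of_pos_of_lt (by omega) (by omega))]

theorem sum_pow_roots_Chi_map {s : ℕ} {n : Fin s → ℕ} (hn : ∀ i, 2 ≤ n i) (k : ℕ) :
    (((Chi n).map (Int.castRingHom ℂ)).roots.map (· ^ k)).sum =
      ∏ i, (phiPowerSum (n i) k : ℂ) := by
  rw [Chi_map_eq_prod_X_sub_C hn, roots_prod_univ_X_sub_C, Multiset.map_map]
  change ∑ x : ∀ i, Fin (n i - 1), (∏ i, zeta (n i) ^ ((x i : ℕ) + 1)) ^ k = _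
  simp_rw [← prod_pow]
  rw [← Fintype.prod_sum fun i (j : Fin (n i - 1)) => (zeta (n i) ^ ((j : ℕ) + 1)) ^ k]
  exact prod_congr rfl fun i _ =>
    (isPrimitiveRoot_zeta (by have := hn i; omega)).sum_pow_succ_pow (by have := hn i; omega) k

theorem prod_phiPowerSum_eq_of_Chi_eq {s t : ℕ} {n : Fin s → ℕ} {m : Fin t → ℕ}
    (hn : ∀ i, 2 ≤ n i) (hm : ∀ i, 2 ≤ m i) (h : Chi n = Chi m) (k : ℕ) :
    ∏ i, phiPowerSum (n i) k = ∏ i, phiPowerSum (m i) k := by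
  apply Int.cast_injective (α := ℂ)
  push_cast
  rw [← sum_pow_roots_Chi_map hn, ← sum_pow_roots_Chi_map hm, h]

theorem mod_two_eq_of_neg_one_pow_eq {a b : ℕ} (h : (-1 : ℤ) ^ a = (-1) ^ b) : a % 2 = b % 2 := by
  rw [neg_one_pow_eq_pow_mod_two, neg_one_pow_eq_pow_mod_two (n := b)] at h
  rcases Nat.mod_two_eq_zero_or_one a with ha | ha <;>
    rcases Nat.mod_two_eq_zero_or_one b with hb | hb <;> simp_all

theorem eq_of_prod_divisors_pow_eq {c c' : ℕ → ℕ} (hc : c 1 = 0) (hc' : c' 1 = 0)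
    (h : ∀ d ≠ 0, ∏ e ∈ d.divisors, (e - 1) ^ c e = ∏ e ∈ d.divisors, (e - 1) ^ c' e)
    {d : ℕ} (hd : 3 ≤ d) : c d = c' d := by
  induction d using Nat.strong_induction_on with
  | _ d ih =>
  have hproper : ∏ e ∈ d.properDivisors, (e - 1) ^ c e = ∏ e ∈ d.properDivisors, (e - 1) ^ c' e :=
    prod_congr rfl fun e he => by
      obtain ⟨-, hed⟩ := Nat.mem_properDivisors.mp he
      have he0 := Nat.pos_of_mem_properDivisors he
      rcases (by omega : e = 1 ∨ e = 2 ∨ 3 ≤ e) with rfl | rfl | he3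
      · simp [hc, hc']
      · simp
      · rw [ih e hed he3]
  have hne : ∏ e ∈ d.properDivisors, (e - 1) ^ c' e ≠ 0 :=
    prod_ne_zero_iff.mpr fun e he => by
      have he0 := Nat.pos_of_mem_properDivisors he
      rcases eq_or_ne e 1 with rfl | he1
      · simp [hc']
      · exact pow_ne_zero _ (by omega)
  have hd' := h d (by omega)
  rw [← Nat.cons_self_properDivisors (by omega), prod_cons, prod_cons, hproper] at hd'
  exact Nat.pow_right_injective (by omega : 2 ≤ d - 1) (mul_right_cancel₀ hne hd')

section Weights

variable {ι : Type*} [Fintype ι] {f : ι → ℕ}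

theorem prod_phiPowerSum_one (hf : ∀ i, 2 ≤ f i) :
    ∏ i, phiPowerSum (f i) 1 = (-1) ^ Fintype.card ι := by
  refine prod_eq_pow_card fun i _ => ?_
  have : f i ≠ 1 := by have := hf i; omega
  simp [phiPowerSum, this]

theorem prod_phiPowerSum_two (hf : ∀ i, 2 ≤ f i) :
    ∏ i, phiPowerSum (f i) 2 = (-1) ^ #{i | ¬f i = 2} := by
  have hterm i : phiPowerSum (f i) 2 = if f i = 2 then 1 else -1 := by
    by_cases h2 : f i = 2
    · simp [phiPowerSum, h2]
    · have : ¬ f i ∣ 2 := fun h => h2 (le_antisymm (Nat.le_of_dvd two_pos h) (hf i))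
      simp [phiPowerSum, h2, this]
  simp [hterm, prod_ite]

theorem natAbs_prod_phiPowerSum (hf : ∀ i, 2 ≤ f i) {d : ℕ} (hd : d ≠ 0) :
    (∏ i, phiPowerSum (f i) d).natAbs = ∏ e ∈ d.divisors, (e - 1) ^ #{i | f i = e} := by
  have hterm i : (phiPowerSum (f i) d).natAbs = if f i ∈ d.divisors then f i - 1 else 1 := by
    have := hf i
    by_cases hdvd : f i ∣ d
    · simp only [phiPowerSum, hdvd, hd, if_true, Nat.mem_divisors, ne_eq, not_false_eq_true,
        and_self]
      omega
    · simp [phiPowerSum, hdvd]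
  have hmaps : ∀ i ∈ univ.filter (fun i => f i ∈ d.divisors), f i ∈ d.divisors :=
    fun i hi => (mem_filter.mp hi).2
  rw [← Int.natAbsHom_apply, map_prod]
  simp only [Int.natAbsHom_apply, hterm, ← prod_filter]
  rw [← prod_fiberwise_of_maps_to hmaps]
  refine prod_congr rfl fun e he => ?_
  have hfiber :
      {i ∈ univ.filter (fun i => f i ∈ d.divisors) | f i = e} = ({i | f i = e} : Finset ι) := by
    ext i
    simp only [mem_filter, mem_univ, true_and, and_iff_right_iff_imp]
    exact fun hi => hi ▸ he
  rw [hfiber]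
  exact prod_eq_pow_card fun i hi => by rw [(mem_filter.mp hi).2]

end Weights

theorem recover_weights {s t : ℕ} (n : Fin s → ℕ) (m : Fin t → ℕ)
    (hn : ∀ i, 2 ≤ n i) (hm : ∀ i, 2 ≤ m i)
    (h : Chi n = Chi m) :
    (∀ d : ℕ, 3 ≤ d →
      (Finset.univ.filter (fun i => n i = d)).card =
        (Finset.univ.filter (fun i => m i = d)).card) ∧
    s % 2 = t % 2 ∧
    (Finset.univ.filter (fun i => n i = 2)).card % 2 =
      (Finset.univ.filter (fun i => m i = 2)).card % 2 := by
  have key := prod_phiPowerSum_eq_of_Chi_eq hn hm h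
  have no_ones {u : ℕ} {p : Fin u → ℕ} (hp : ∀ i, 2 ≤ p i) : #{i | p i = 1} = 0 :=
    card_eq_zero.mpr (filter_eq_empty_iff.mpr fun i _ => by have := hp i; omega)
  have hs : s % 2 = t % 2 := by
    have h1 := key 1
    rw [prod_phiPowerSum_one hn, prod_phiPowerSum_one hm, Fintype.card_fin,
      Fintype.card_fin] at h1
    exact mod_two_eq_of_neg_one_pow_eq h1
  refine ⟨fun d hd => ?_, hs, ?_⟩
  · refine eq_of_prod_divisors_pow_eq (c := fun e => #{i | n i = e})
      (c' := fun e => #{i | m i = e}) (no_ones hn) (no_ones hm) (fun d hd => ?_) hd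
    rw [← natAbs_prod_phiPowerSum hn hd, ← natAbs_prod_phiPowerSum hm hd, key]
  · have h2 := key 2
    rw [prod_phiPowerSum_two hn, prod_phiPowerSum_two hm] at h2
    have := mod_two_eq_of_neg_one_pow_eq h2
    have hsn := card_filter_add_card_filter_not (s := univ) fun i => n i = 2
    have hsm := card_filter_add_card_filter_not (s := univ) fun i => m i = 2
    simp only [card_univ, Fintype.card_fin] at hsn hsm
    omega
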